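/- Let α⁻ ≥ α⁺ > 1 and define λ = (α⁻−1)/(α⁺α⁻−1), λ* = (α⁺−1)/(α⁺α⁻−1), γ = (α⁺−1)(α⁻−1)/(α⁺α⁻−1), so that λ, λ*, γ > 0 and λ+λ*+γ = 1. Let (ν_t⁺)_{t≥0} be Borel probability measures with ν_0⁺ = δ_0 and ν_t⁺((0,∞)) = 1 for t > 0, with finite first moments locally bounded in t, satisfying for every f ∈ C_b²(ℝ) the equation ⟨ν_t⁺,f⟩ = f(0) + α⁺ ∫_0^t ∫_ℝ f'(x) ν_s⁺(dx) ds + (1/2) ∫_0^t ∬_{ℝ²} Δf(x,y)·(x+y) ν_s⁺(dx)ν_s⁺(dy) ds, and let (ν_t⁻)_{t≥0} be the reflections ν_t⁻(A) := η_t(−A) of a family (η_t)_{t≥0} satisfying the same equation with α⁺ replaced by α⁻ (so ν_t⁻ is supported in (−∞,0) for t > 0, ν_0⁻ = δ_0). Define μ_t := λ·ν⁺_{λt} + γ·δ_0 + λ*·ν⁻_{λ* t}. Then (μ_t)_{t≥0} satisfies, for every f ∈ C_b²(ℝ) and t ≥ 0, ⟨μ_t,f⟩ = f(0) + α ∫_0^t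 ∫_ℝ f'(x) μ_s(dx) ds + (1/2) ∫_0^t ∬_{ℝ²} Δf(x,y)·(|x|+|y|) μ_s(dx)μ_s(dy) ds, where α = (α⁻−α⁺)/(α⁺α⁻−1) ∈ [0,1). -/

import Mathlib

/-!
The kernel `Δf(x,y) (|x| + |y|)` equals `Δf(x,y) (x + y)` when `x, y ≥ 0`, equals
`Δ(f ∘ neg)(-x,-y) ((-x) + (-y))` when `x, y ≤ 0`, and collapses to `±(f'(x) - f'(y))` when `x` and
`y` lie on opposite sides of `0`. Expanding the quadratic term of `μ_s` over the three components
therefore gives the quadratic terms of `ν⁺` and of `η` (after reflection) plus cross terms that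
are linear in `⟨ν⁺, f'⟩`, `⟨η, (f ∘ neg)'⟩` and `f'(0)`. After the time changes `s ↦ λ s` and
`s ↦ λ* s` the cross terms are exactly absorbed by the drifts, because
`α⁺ λ = α + λ* + γ`, `α⁻ λ* = λ + γ - α` and `α = λ - λ*`.

To integrate these identities in time one needs `s ↦ ν_s` to be measurable; this follows from the
equation itself, which writes `⟨ν_t, g⟩` as a sum of primitives, and primitives are measurable.
-/

open MeasureTheory Filter Set

/-- The difference quotient of the derivative: `Δf(x,y) = (f'(x)-f'(y))/(x-y)` for `x ≠ y`,
and `Δf(x,x) = f''(x)`. -/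
noncomputable def deltaF (f : ℝ → ℝ) (x y : ℝ) : ℝ :=
  if x = y then deriv (deriv f) x else (deriv f x - deriv f y) / (x - y)

/-- `C_b²(ℝ)`: twice continuously differentiable with `f`, `f'`, `f''` bounded. -/
def CbTwo (f : ℝ → ℝ) : Prop :=
  ContDiff ℝ 2 f ∧ ∃ C : ℝ, ∀ x : ℝ,
    |f x| ≤ C ∧ |deriv f x| ≤ C ∧ |deriv (deriv f) x| ≤ C

open Topology Function
open scoped Interval

lemma deltaF_mul_sub (f : ℝ → ℝ) (x y : ℝ) :
    deltaF f x y * (x - y) = deriv f x - deriv f y := by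
  by_cases h : x = y
  · simp [deltaF, h]
  · rw [deltaF, if_neg h, div_mul_cancel₀ _ (sub_ne_zero.2 h)]

lemma measurable_deltaF (f : ℝ → ℝ) : Measurable (uncurry (deltaF f)) :=
  Measurable.ite (measurableSet_eq_fun measurable_fst measurable_snd)
    ((measurable_deriv _).comp measurable_fst)
    ((((measurable_deriv f).comp measurable_fst).sub ((measurable_deriv f).comp measurable_snd)).div
      (measurable_fst.sub measurable_snd))

lemma abs_deltaF_le {f : ℝ → ℝ} {C : ℝ} (hf : Differentiable ℝ (deriv f))
    (hC : ∀ x, |deriv (deriv f) x| ≤ C) (x y : ℝ) : |deltaF f x y| ≤ C := by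
  by_cases h : x = y
  · simpa [deltaF, h] using hC y
  rw [deltaF, if_neg h, abs_div, div_le_iff₀ (abs_pos.2 (sub_ne_zero.2 h))]
  simpa [← Real.norm_eq_abs] using
    convex_univ.norm_image_sub_le_of_norm_deriv_le (fun z _ => hf z) (fun z _ => hC z)
      (mem_univ y) (mem_univ x)

lemma deltaF_comp_neg (f : ℝ → ℝ) (x y : ℝ) :
    deltaF (fun z => f (-z)) x y = deltaF f (-x) (-y) := by
  have hd : deriv (fun z => f (-z)) = fun z => -deriv f (-z) := funext fun z => deriv_comp_neg f z
  have hdd : deriv (deriv fun z => f (-z)) = fun z => deriv (deriv f) (-z) := by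
    rw [hd]; funext z
    rw [deriv.fun_neg, deriv_comp_neg, neg_neg]
  by_cases h : x = y
  · simp [deltaF, h, hdd]
  · rw [deltaF, deltaF, if_neg h, if_neg (neg_injective.ne h), hd]
    rw [div_eq_div_iff (sub_ne_zero.2 h) (sub_ne_zero.2 (neg_injective.ne h))]
    ring

lemma deltaF_mul_abs_add_abs_of_nonneg_of_nonpos (f : ℝ → ℝ) {x y : ℝ} (hx : 0 ≤ x)
    (hy : y ≤ 0) : deltaF f x y * (|x| + |y|) = deriv f x - deriv f y := by
  rw [abs_of_nonneg hx, abs_of_nonpos hy, ← deltaF_mul_sub, sub_eq_add_neg]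

lemma deltaF_mul_abs_add_abs_of_nonpos_of_nonneg (f : ℝ → ℝ) {x y : ℝ} (hx : x ≤ 0)
    (hy : 0 ≤ y) : deltaF f x y * (|x| + |y|) = deriv f y - deriv f x := by
  rw [abs_of_nonpos hx, abs_of_nonneg hy, ← neg_sub, ← deltaF_mul_sub]
  ring

lemma deriv_comp_mul_add (f : ℝ → ℝ) (c d : ℝ) :
    deriv (fun x => f (c * x + d)) = fun x => c * deriv f (c * x + d) := by
  funext x
  simpa [deriv_comp_add_const] using deriv_comp_mul_left (f := fun y => f (y + d)) (c := c) (x := x)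

namespace CbTwo

variable {f : ℝ → ℝ}

lemma integrable (hf : CbTwo f) (μ : Measure ℝ) [IsFiniteMeasure μ] : Integrable f μ :=
  let ⟨C, hC⟩ := hf.2
  (integrable_const C).mono' hf.1.continuous.aestronglyMeasurable (ae_of_all _ fun x => (hC x).1)

lemma exists_abs_deriv_le (hf : CbTwo f) : ∃ C, ∀ x, |deriv f x| ≤ C :=
  hf.2.imp fun _ hC x => (hC x).2.1

lemma integrable_deriv (hf : CbTwo f) (μ : Measure ℝ) [IsFiniteMeasure μ] :
    Integrable (deriv f) μ :=
  let ⟨C, hC⟩ := hf.exists_abs_deriv_le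
  (integrable_const C).mono' (measurable_deriv f).aestronglyMeasurable (ae_of_all _ hC)

lemma exists_abs_deltaF_mul_le (hf : CbTwo f) {K : ℝ → ℝ → ℝ} (hK : ∀ x y, |K x y| ≤ |x| + |y|) :
    ∃ C, ∀ x y, |deltaF f x y * K x y| ≤ C * (|x| + |y|) := by
  obtain ⟨C, hC⟩ := hf.2
  have hΔ := abs_deltaF_le hf.1.differentiable_deriv_two fun x => (hC x).2.2
  refine ⟨C, fun x y => ?_⟩
  rw [abs_mul]
  exact mul_le_mul (hΔ x y) (hK x y) (abs_nonneg _) ((abs_nonneg _).trans (hΔ x y))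

lemma comp_mul_add (hf : CbTwo f) (c d : ℝ) : CbTwo (fun x => f (c * x + d)) := by
  obtain ⟨hcd, C, hC⟩ := hf
  refine ⟨hcd.comp (contDiff_const.mul contDiff_id |>.add contDiff_const),
    max (max C (|c| * C)) (c ^ 2 * C), fun x => ?_⟩
  simp only [deriv_comp_mul_add, deriv_const_mul_field', abs_mul]
  obtain ⟨h0, h1, h2⟩ := hC (c * x + d)
  refine ⟨?_, ?_, ?_⟩
  · exact h0.trans ((le_max_left _ _).trans (le_max_left _ _))
  · exact (mul_le_mul_of_nonneg_left h1 (abs_nonneg c)).trans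
      ((le_max_right _ _).trans (le_max_left _ _))
  · rw [← mul_assoc, ← abs_mul, ← sq, abs_of_nonneg (sq_nonneg c)]
    exact (mul_le_mul_of_nonneg_left h2 (sq_nonneg c)).trans (le_max_right _ _)

lemma comp_neg (hf : CbTwo f) : CbTwo (fun x => f (-x)) := by
  simpa using hf.comp_mul_add (-1) 0

end CbTwo

lemma hasCompactSupport_deriv_smoothTransition :
    HasCompactSupport (deriv Real.smoothTransition) := by
  refine HasCompactSupport.intro (isCompact_Icc (a := 0) (b := 1)) fun x hx => ?_
  simp only [mem_Icc, not_and_or, not_le] at hx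
  rcases hx with hx | hx
  · have : Real.smoothTransition =ᶠ[𝓝 x] fun _ => 0 := eventually_of_mem (Iio_mem_nhds hx)
      fun y hy => Real.smoothTransition.zero_of_nonpos (le_of_lt hy)
    simp [this.deriv_eq]
  · have : Real.smoothTransition =ᶠ[𝓝 x] fun _ => 1 := eventually_of_mem (Ioi_mem_nhds hx)
      fun y hy => Real.smoothTransition.one_of_one_le (le_of_lt hy)
    simp [this.deriv_eq]

lemma cbTwo_smoothTransition : CbTwo Real.smoothTransition := by
  have hcd : ContDiff ℝ (2 + 1) Real.smoothTransition := Real.smoothTransition.contDiff (n := 3)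
  obtain ⟨C₁, hC₁⟩ := (hcd.continuous_deriv (by norm_num)).bounded_above_of_compact_support
    hasCompactSupport_deriv_smoothTransition
  obtain ⟨C₂, hC₂⟩ := (hcd.deriv'.continuous_deriv (by norm_num)).bounded_above_of_compact_support
    hasCompactSupport_deriv_smoothTransition.deriv
  refine ⟨hcd.of_le (by norm_num), max 1 (max C₁ C₂), fun x => ⟨?_, ?_, ?_⟩⟩
  · rw [abs_of_nonneg (Real.smoothTransition.nonneg x)]
    exact (Real.smoothTransition.le_one x).trans (le_max_left _ _)
  · exact (hC₁ x).trans ((le_max_left _ _).trans (le_max_right _ _))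
  · exact (hC₂ x).trans ((le_max_right _ _).trans (le_max_right _ _))

lemma tendsto_smoothTransition_indicator_Iio (a x : ℝ) :
    Tendsto (fun n : ℕ => Real.smoothTransition ((n : ℝ) * (a - x))) atTop
      (𝓝 ((Iio a).indicator 1 x)) := by
  by_cases hx : x < a
  · rw [indicator_of_mem (mem_Iio.2 hx)]
    have hev : ∀ᶠ n : ℕ in atTop, 1 ≤ (n : ℝ) * (a - x) :=
      (tendsto_natCast_atTop_atTop.atTop_mul_const (sub_pos.2 hx)).eventually_ge_atTop 1
    exact tendsto_const_nhds.congr'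
      (hev.mono fun n hn => (Real.smoothTransition.one_of_one_le hn).symm)
  · rw [indicator_of_notMem (notMem_Iio.2 (not_lt.1 hx))]
    refine tendsto_const_nhds.congr fun n => (Real.smoothTransition.zero_of_nonpos ?_).symm
    exact mul_nonpos_of_nonneg_of_nonpos n.cast_nonneg (by linarith [not_lt.1 hx])

lemma measurable_of_measurable_integral_cbTwo {α : Type*} [MeasurableSpace α]
    {κ : α → Measure ℝ} [∀ u, IsProbabilityMeasure (κ u)]
    (hκ : ∀ g, CbTwo g → Measurable fun u => ∫ x, g x ∂κ u) : Measurable κ := by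
  refine .measure_of_isPiSystem_of_isProbabilityMeasure (borel_eq_generateFrom_Iio ℝ)
    isPiSystem_Iio ?_
  rintro _ ⟨a, rfl⟩
  have hlim : ∀ u, Tendsto (fun n : ℕ => ∫ x, Real.smoothTransition (n * (a - x)) ∂κ u) atTop
      (𝓝 ((κ u).real (Iio a))) := by
    intro u
    have := tendsto_integral_of_dominated_convergence (μ := κ u) (fun _ => 1)
      (fun n => (Real.smoothTransition.continuous.comp
        (continuous_const.mul (continuous_const.sub continuous_id))).aestronglyMeasurable)
      (integrable_const 1)
      (fun n => ae_of_all _ fun x => by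
        simp [abs_of_nonneg (Real.smoothTransition.nonneg _), Real.smoothTransition.le_one])
      (ae_of_all _ (tendsto_smoothTransition_indicator_Iio a))
    simpa [integral_indicator measurableSet_Iio] using this
  have hmeas : Measurable fun u => (κ u).real (Iio a) :=
    measurable_of_tendsto_metrizable (fun n => hκ _ (by
      convert cbTwo_smoothTransition.comp_mul_add (-(n : ℝ)) (n * a) using 3; ring))
      (tendsto_pi_nhds.2 hlim)
  simpa [ofReal_measureReal] using hmeas.ennreal_ofReal

lemma exists_Icc_mem_nhdsWithin {α : Type*} [TopologicalSpace α] [LinearOrder α]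
    [OrderTopology α] {S : Set α} {t : α} (ht : t ∈ S) :
    ∃ a ∈ S, ∃ b ∈ S, Icc a b ∈ 𝓝[S] t := by
  obtain ⟨b, hbS, htb, hb⟩ : ∃ b ∈ S, t ≤ b ∧ Icc t b ∈ 𝓝[S ∩ Ici t] t := by
    by_cases h : ∃ b ∈ S, t < b
    · obtain ⟨b, hbS, htb⟩ := h
      exact ⟨b, hbS, htb.le, nhdsWithin_mono _ inter_subset_right (Icc_mem_nhdsGE htb)⟩
    · refine ⟨t, ht, le_rfl, mem_of_superset self_mem_nhdsWithin fun y hy => ⟨hy.2, ?_⟩⟩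
      exact not_lt.1 fun hty => h ⟨y, hy.1, hty⟩
  obtain ⟨a, haS, hat, ha⟩ : ∃ a ∈ S, a ≤ t ∧ Icc a t ∈ 𝓝[S ∩ Iic t] t := by
    by_cases h : ∃ a ∈ S, a < t
    · obtain ⟨a, haS, hat⟩ := h
      exact ⟨a, haS, hat.le, nhdsWithin_mono _ inter_subset_right (Icc_mem_nhdsLE hat)⟩
    · refine ⟨t, ht, le_rfl, mem_of_superset self_mem_nhdsWithin fun y hy => ⟨?_, hy.2⟩⟩
      exact not_lt.1 fun hyt => h ⟨y, hy.1, hyt⟩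
  have hsplit : S = S ∩ Iic t ∪ S ∩ Ici t := by
    rw [← inter_union_distrib_left, Iic_union_Ici, inter_univ]
  refine ⟨a, haS, b, hbS, ?_⟩
  rw [hsplit, nhdsWithin_union]
  exact ⟨mem_of_superset ha (Icc_subset_Icc_right htb),
    mem_of_superset hb (Icc_subset_Icc_left hat)⟩

/-- Off the interval `S` of those `t` for which `h` is integrable on `[0, t]` the primitive takes
the junk value `0`; on `S` it is continuous. -/
lemma measurable_primitive (h : ℝ → ℝ) : Measurable fun t => ∫ s in (0:ℝ)..t, h s := by
  classical
  set S := {t | IntervalIntegrable h volume 0 t}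
  have hS : S.OrdConnected := ⟨fun a ha b hb x hx => by
    rcases le_total 0 x with h0 | h0
    · exact hb.mono_set (uIcc_subset_uIcc left_mem_uIcc
        ⟨(min_le_left _ _).trans h0, hx.2.trans (le_max_right _ _)⟩)
    · exact ha.mono_set (uIcc_subset_uIcc left_mem_uIcc
        ⟨(min_le_right _ _).trans hx.1, h0.trans (le_max_left _ _)⟩)⟩
  have hcont : ContinuousOn (fun t => ∫ s in (0:ℝ)..t, h s) S := by
    intro t ht
    obtain ⟨a, haS, b, hbS, hab⟩ := exists_Icc_mem_nhdsWithin ht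
    have h0S : (0 : ℝ) ∈ S := IntervalIntegrable.refl
    have hmin : min a 0 ∈ S := by rcases min_choice a 0 with h | h <;> rw [h] <;> assumption
    have hmax : max b 0 ∈ S := by rcases max_choice b 0 with h | h <;> rw [h] <;> assumption
    have hint : IntervalIntegrable h volume (min a 0) (max b 0) := hmin.symm.trans hmax
    have hsub : Icc a b ⊆ uIcc (min a 0) (max b 0) := by
      rw [uIcc_of_le ((min_le_right _ _).trans (le_max_right _ _))]
      exact Icc_subset_Icc (min_le_left _ _) (le_max_left _ _)
    have h0 : (0 : ℝ) ∈ uIcc (min a 0) (max b 0) := by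
      rw [uIcc_of_le ((min_le_right _ _).trans (le_max_right _ _))]
      exact ⟨min_le_right _ _, le_max_right _ _⟩
    exact ((intervalIntegral.continuousOn_primitive_interval' hint h0) t
      (hsub (mem_of_mem_nhdsWithin ht hab))).mono_of_mem_nhdsWithin (mem_of_superset hab hsub)
  have heq : (fun t => ∫ s in (0:ℝ)..t, h s) = S.piecewise (fun t => ∫ s in (0:ℝ)..t, h s) 0 :=
    funext fun t => by
      by_cases ht : t ∈ S
      · simp [ht]
      · simp [ht, intervalIntegral.integral_undef ht]
  rw [heq]
  exact hcont.measurable_piecewise continuousOn_const hS.measurableSet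

section MeasurableFamily

variable {α : Type*} [MeasurableSpace α] {κ : α → Measure ℝ}

lemma measurable_integral_of_measurable_measure (hκ : Measurable κ) {h : ℝ → ℝ}
    (hh : Measurable h) : Measurable fun u => ∫ x, h x ∂κ u :=
  (hh.stronglyMeasurable.integral_kernel (κ := ⟨κ, hκ⟩)).measurable

lemma measurable_integral_integral_of_measurable_measure [∀ u, IsProbabilityMeasure (κ u)]
    (hκ : Measurable κ) {k : ℝ → ℝ → ℝ} (hk : Measurable (uncurry k)) :
    Measurable fun u => ∫ x, ∫ y, k x y ∂κ u ∂κ u := by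
  let K : ProbabilityTheory.Kernel α ℝ := ⟨κ, hκ⟩
  have : ProbabilityTheory.IsMarkovKernel K :=
    ⟨fun u => inferInstanceAs (IsProbabilityMeasure (κ u))⟩
  have hinner : StronglyMeasurable fun p : α × ℝ => ∫ y, k p.2 y ∂κ p.1 :=
    (hk.comp (measurable_fst.snd.prodMk measurable_snd)).stronglyMeasurable
      |>.integral_kernel_prod_right' (κ := K.comap Prod.fst measurable_fst)
  exact (hinner.integral_kernel_prod_right' (κ := K)).measurable

end MeasurableFamily

lemma integral_sum_smul_measure {α ι : Type*} [MeasurableSpace α] (s : Finset ι) {w : ι → ℝ}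
    (hw : ∀ i ∈ s, 0 ≤ w i) {μ : ι → Measure α} {g : α → ℝ} (hg : ∀ i ∈ s, Integrable g (μ i)) :
    ∫ x, g x ∂(∑ i ∈ s, ENNReal.ofReal (w i) • μ i) = ∑ i ∈ s, w i * ∫ x, g x ∂μ i := by
  rw [integral_finsetSum_measure fun i hi => (hg i hi).smul_measure ENNReal.ofReal_ne_top]
  refine Finset.sum_congr rfl fun i hi => ?_
  rw [integral_smul_measure, ENNReal.toReal_ofReal (hw i hi), smul_eq_mul]

section LinearGrowth

variable {ν ν' : Measure ℝ} {k : ℝ → ℝ → ℝ} {C : ℝ}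

lemma integrable_of_abs_le_linear [IsFiniteMeasure ν] (hν : Integrable (fun x => |x|) ν)
    {g : ℝ → ℝ} (hg : AEStronglyMeasurable g ν) {a b : ℝ} (hb : ∀ x, |g x| ≤ a + b * |x|) :
    Integrable g ν :=
  ((integrable_const a).add (hν.const_mul b)).mono' hg (ae_of_all _ hb)

lemma abs_integral_le_of_abs_le_linear [IsFiniteMeasure ν] (hν : Integrable (fun x => |x|) ν)
    {g : ℝ → ℝ} {x : ℝ} (hg : ∀ y, |g y| ≤ C * (|x| + |y|)) :
    |∫ y, g y ∂ν| ≤ C * ν.real univ * |x| + C * ∫ y, |y| ∂ν := by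
  have hint : Integrable (fun y => C * (|x| + |y|)) ν := ((integrable_const _).add hν).const_mul C
  calc |∫ y, g y ∂ν| ≤ ∫ y, C * (|x| + |y|) ∂ν := by
        rw [← Real.norm_eq_abs]
        exact norm_integral_le_of_norm_le hint
          (ae_of_all _ fun y => (Real.norm_eq_abs _).trans_le (hg y))
    _ = C * ν.real univ * |x| + C * ∫ y, |y| ∂ν := by
        rw [integral_const_mul, integral_add (integrable_const _) hν, integral_const, smul_eq_mul]
        ring

lemma integrable_integral_of_abs_le_linear [IsFiniteMeasure ν] [IsFiniteMeasure ν']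
    (hν : Integrable (fun x => |x|) ν) (hν' : Integrable (fun x => |x|) ν')
    (hk : Measurable (uncurry k)) (hkC : ∀ x y, |k x y| ≤ C * (|x| + |y|)) :
    Integrable (fun x => ∫ y, k x y ∂ν') ν :=
  integrable_of_abs_le_linear (a := C * ∫ y, |y| ∂ν') (b := C * ν'.real univ) hν
    hk.stronglyMeasurable.integral_prod_right.aestronglyMeasurable
    fun x => (abs_integral_le_of_abs_le_linear hν' (hkC x)).trans_eq (by ring)

lemma abs_integral_integral_le [IsProbabilityMeasure ν] (hν : Integrable (fun x => |x|) ν)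
    (hkC : ∀ x y, |k x y| ≤ C * (|x| + |y|)) :
    |∫ x, ∫ y, k x y ∂ν ∂ν| ≤ 2 * C * ∫ x, |x| ∂ν := by
  have hint : Integrable (fun x => C * |x| + C * ∫ y, |y| ∂ν) ν :=
    (hν.const_mul C).add (integrable_const _)
  calc |∫ x, ∫ y, k x y ∂ν ∂ν| ≤ ∫ x, (C * |x| + C * ∫ y, |y| ∂ν) ∂ν := by
        rw [← Real.norm_eq_abs]
        refine norm_integral_le_of_norm_le hint (ae_of_all _ fun x => ?_)
        simpa using abs_integral_le_of_abs_le_linear hν (hkC x)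
    _ = 2 * C * ∫ x, |x| ∂ν := by
        rw [integral_add (hν.const_mul C) (integrable_const _), integral_const_mul]
        simp; ring

lemma integral_integral_sum_smul_measure {ι : Type*} (s : Finset ι) {w : ι → ℝ}
    (hw : ∀ i ∈ s, 0 ≤ w i) {μ : ι → Measure ℝ} [∀ i, IsFiniteMeasure (μ i)]
    (hμ : ∀ i ∈ s, Integrable (fun x => |x|) (μ i))
    (hk : Measurable (uncurry k)) (hkC : ∀ x y, |k x y| ≤ C * (|x| + |y|)) :
    ∫ x, ∫ y, k x y ∂(∑ i ∈ s, ENNReal.ofReal (w i) • μ i) ∂(∑ i ∈ s, ENNReal.ofReal (w i) • μ i)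
      = ∑ i ∈ s, ∑ j ∈ s, w i * w j * ∫ x, ∫ y, k x y ∂μ j ∂μ i := by
  have hinner : ∀ i ∈ s, ∀ j ∈ s, Integrable (fun x => ∫ y, k x y ∂μ j) (μ i) := fun i hi j hj =>
    integrable_integral_of_abs_le_linear (hμ i hi) (hμ j hj) hk hkC
  have hsplit : ∀ x, ∫ y, k x y ∂(∑ i ∈ s, ENNReal.ofReal (w i) • μ i)
      = ∑ j ∈ s, w j * ∫ y, k x y ∂μ j := fun x =>
    integral_sum_smul_measure s hw fun j hj => integrable_of_abs_le_linear (a := C * |x|) (b := C)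
      (hμ j hj) (hk.comp measurable_prodMk_left).aestronglyMeasurable
      fun y => (hkC x y).trans_eq (mul_add _ _ _)
  simp only [hsplit]
  rw [integral_sum_smul_measure s hw fun i hi => integrable_finsetSum _ fun j hj =>
    (hinner i hi j hj).const_mul _]
  refine Finset.sum_congr rfl fun i hi => ?_
  rw [integral_finsetSum _ fun j hj => (hinner i hi j hj).const_mul _, Finset.mul_sum]
  refine Finset.sum_congr rfl fun j hj => ?_
  rw [integral_const_mul]; ring

end LinearGrowth

section TimeIntegrals

lemma intervalIntegrable_of_measurable_comp_max {F : ℝ → ℝ} (hF : Measurable fun u => F (max u 0))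
    {T C : ℝ} (hT : 0 ≤ T) (hb : ∀ s ∈ Ioc 0 T, |F s| ≤ C) : IntervalIntegrable F volume 0 T := by
  rw [intervalIntegrable_iff_integrableOn_Ioc_of_le hT]
  have hae : (fun u => F (max u 0)) =ᵐ[volume.restrict (Ioc 0 T)] F :=
    (ae_restrict_mem measurableSet_Ioc).mono fun s hs => by simp [max_eq_left hs.1.le]
  exact (integrableOn_const (C := C) measure_Ioc_lt_top.ne).mono'
    (hF.aestronglyMeasurable.congr hae) ((ae_restrict_mem measurableSet_Ioc).mono hb)

variable {ν : ℝ → Measure ℝ} [∀ t, IsProbabilityMeasure (ν t)]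

lemma intervalIntegrable_integral_of_measurable (hν : Measurable fun u => ν (max u 0))
    {h : ℝ → ℝ} (hh : Measurable h) {C : ℝ} (hC : ∀ x, |h x| ≤ C) {T : ℝ} (hT : 0 ≤ T) :
    IntervalIntegrable (fun s => ∫ x, h x ∂ν s) volume 0 T := by
  refine intervalIntegrable_of_measurable_comp_max
    (measurable_integral_of_measurable_measure hν hh) hT (C := C) fun s _ => ?_
  simpa using norm_integral_le_of_norm_le_const (μ := ν s) (f := h)
    (ae_of_all _ fun x => (Real.norm_eq_abs (h x)).trans_le (hC x))

lemma intervalIntegrable_integral_integral_of_measurable (hν : Measurable fun u => ν (max u 0))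
    {k : ℝ → ℝ → ℝ} (hk : Measurable (uncurry k)) {C : ℝ}
    (hkC : ∀ x y, |k x y| ≤ C * (|x| + |y|))
    (hν₁ : ∀ t, 0 ≤ t → Integrable (fun x => |x|) (ν t))
    (hbd : ∀ T > (0:ℝ), ∃ M : ℝ, ∀ t ∈ Icc (0:ℝ) T, ∫ x, |x| ∂(ν t) ≤ M) {T : ℝ} (hT : 0 ≤ T) :
    IntervalIntegrable (fun s => ∫ x, ∫ y, k x y ∂ν s ∂ν s) volume 0 T := by
  have hC : 0 ≤ C := by simpa using (abs_nonneg _).trans (hkC 1 0)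
  obtain ⟨M, hM⟩ := hbd (T + 1) (by linarith)
  refine intervalIntegrable_of_measurable_comp_max
    (measurable_integral_integral_of_measurable_measure hν hk) hT (C := 2 * C * M) fun s hs => ?_
  refine (abs_integral_integral_le (hν₁ s hs.1.le) hkC).trans ?_
  gcongr
  exact hM s ⟨hs.1.le, by linarith [hs.2]⟩

lemma integral_comp_mul_left_add_const_add {F G : ℝ → ℝ} {a c t : ℝ} (ha : 0 < a) (hc : 0 < c)
    (hF : IntervalIntegrable F volume 0 (a * t)) (hG : IntervalIntegrable G volume 0 (c * t))
    (b : ℝ) :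
    ∫ s in (0:ℝ)..t, (a * F (a * s) + b + c * G (c * s))
      = (∫ s in (0:ℝ)..a * t, F s) + b * t + ∫ s in (0:ℝ)..c * t, G s := by
  have hF' : IntervalIntegrable (fun s => a * F (a * s)) volume 0 t := by
    simpa [ha.ne'] using (hF.comp_mul_left (c := a)).const_mul a
  have hG' : IntervalIntegrable (fun s => c * G (c * s)) volume 0 t := by
    simpa [hc.ne'] using (hG.comp_mul_left (c := c)).const_mul c
  rw [intervalIntegral.integral_add (hF'.add intervalIntegrable_const) hG',
    intervalIntegral.integral_add hF' intervalIntegrable_const]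
  simp [intervalIntegral.integral_const_mul, intervalIntegral.integral_comp_mul_left, ha.ne',
    hc.ne', mul_comm t b]

end TimeIntegrals

lemma integral_integral_of_ae_eq_sub {α : Type*} [MeasurableSpace α] {ν ν' : Measure α}
    [IsProbabilityMeasure ν] [IsProbabilityMeasure ν'] {k : α → α → ℝ} {F : α → ℝ}
    (hF : Integrable F ν) (hF' : Integrable F ν') (hk : ∀ᵐ x ∂ν, ∀ᵐ y ∂ν', k x y = F x - F y) :
    ∫ x, ∫ y, k x y ∂ν' ∂ν = ∫ x, F x ∂ν - ∫ y, F y ∂ν' := by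
  calc ∫ x, ∫ y, k x y ∂ν' ∂ν = ∫ x, (F x - ∫ y, F y ∂ν') ∂ν :=
        integral_congr_ae <| hk.mono fun x hx => by
          dsimp only
          rw [integral_congr_ae hx, integral_sub (integrable_const _) hF', integral_const]
          simp
    _ = ∫ x, F x ∂ν - ∫ y, F y ∂ν' := by
        rw [integral_sub hF (integrable_const _), integral_const]
        simp

lemma integral_integral_map_neg {η : Measure ℝ} [SFinite η] {k : ℝ → ℝ → ℝ}
    (hk : Measurable (uncurry k)) :
    ∫ x, ∫ y, k x y ∂(η.map fun x => -x) ∂(η.map fun x => -x)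
      = ∫ x, ∫ y, k (-x) (-y) ∂η ∂η := by
  rw [integral_map measurable_neg.aemeasurable
    hk.stronglyMeasurable.integral_prod_right.aestronglyMeasurable]
  exact integral_congr_ae (ae_of_all _ fun x =>
    integral_map measurable_neg.aemeasurable (hk.comp measurable_prodMk_left).aestronglyMeasurable)

lemma integral_integral_deltaF_mul_abs_of_nonneg (f : ℝ → ℝ) {ν : Measure ℝ} (hν : ∀ᵐ x ∂ν, 0 ≤ x) :
    ∫ x, ∫ y, deltaF f x y * (|x| + |y|) ∂ν ∂ν = ∫ x, ∫ y, deltaF f x y * (x + y) ∂ν ∂ν :=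
  integral_congr_ae <| hν.mono fun x hx => integral_congr_ae <| hν.mono fun y hy => by
    simp only [abs_of_nonneg hx, abs_of_nonneg hy]

lemma integral_deriv_map_neg (f : ℝ → ℝ) (η : Measure ℝ) :
    ∫ x, deriv f x ∂(η.map fun x => -x) = -∫ x, deriv (fun z => f (-z)) x ∂η := by
  rw [integral_map measurable_neg.aemeasurable (measurable_deriv f).aestronglyMeasurable,
    ← integral_neg]
  simp [deriv_comp_neg]

lemma ae_nonneg_of_measure_Ioi_eq_one {ν : Measure ℝ} [IsProbabilityMeasure ν]
    (h : ν (Ioi 0) = 1) : ∀ᵐ x ∂ν, 0 ≤ x :=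
  ((ae_iff_measure_eq (p := (· ∈ Ioi 0)) measurableSet_Ioi.nullMeasurableSet).2
    (by rw [ofPred_mem_eq, h, measure_univ])).mono fun _ hx => le_of_lt hx

lemma ae_map_neg_nonpos {η : Measure ℝ} (hη : ∀ᵐ x ∂η, 0 ≤ x) :
    ∀ᵐ x ∂(η.map fun x => -x), x ≤ 0 := by
  rw [ae_map_iff measurable_neg.aemeasurable measurableSet_Iic]
  exact hη.mono fun _ hx => neg_nonpos.2 hx

lemma integrable_abs_map_neg {η : Measure ℝ} (hη : Integrable (fun x => |x|) η) :
    Integrable (fun x => |x|) (η.map fun x => -x) := by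
  rw [integrable_map_measure measurable_abs.aestronglyMeasurable measurable_neg.aemeasurable]
  simpa [comp_def] using hη

section AbsKernel

variable (f : ℝ → ℝ) {ν ν' : Measure ℝ} [IsProbabilityMeasure ν] [IsProbabilityMeasure ν']

lemma integral_integral_deltaF_mul_abs_of_nonneg_of_nonpos (hν : ∀ᵐ x ∂ν, 0 ≤ x)
    (hν' : ∀ᵐ y ∂ν', y ≤ 0) (hf : Integrable (deriv f) ν) (hf' : Integrable (deriv f) ν') :
    ∫ x, ∫ y, deltaF f x y * (|x| + |y|) ∂ν' ∂ν = ∫ x, deriv f x ∂ν - ∫ y, deriv f y ∂ν' :=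
  integral_integral_of_ae_eq_sub hf hf' <| hν.mono fun _ hx =>
    hν'.mono fun _ hy => deltaF_mul_abs_add_abs_of_nonneg_of_nonpos f hx hy

lemma integral_integral_deltaF_mul_abs_of_nonpos_of_nonneg (hν : ∀ᵐ x ∂ν, x ≤ 0)
    (hν' : ∀ᵐ y ∂ν', 0 ≤ y) (hf : Integrable (deriv f) ν) (hf' : Integrable (deriv f) ν') :
    ∫ x, ∫ y, deltaF f x y * (|x| + |y|) ∂ν' ∂ν = ∫ y, deriv f y ∂ν' - ∫ x, deriv f x ∂ν := by
  rw [integral_integral_of_ae_eq_sub hf.neg hf'.neg <| hν.mono fun _ hx => hν'.mono fun _ hy =>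
    (deltaF_mul_abs_add_abs_of_nonpos_of_nonneg f hx hy).trans (neg_sub_neg _ _).symm]
  simp only [Pi.neg_apply, integral_neg]
  ring

lemma integral_integral_deltaF_mul_abs_map_neg {η : Measure ℝ} [SFinite η]
    (hη : ∀ᵐ x ∂η, 0 ≤ x) :
    ∫ x, ∫ y, deltaF f x y * (|x| + |y|) ∂(η.map fun x => -x) ∂(η.map fun x => -x)
      = ∫ x, ∫ y, deltaF (fun z => f (-z)) x y * (x + y) ∂η ∂η := by
  rw [integral_integral_map_neg (k := fun x y => deltaF f x y * (|x| + |y|))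
    ((measurable_deltaF f).mul (measurable_fst.abs.add measurable_snd.abs)),
    ← integral_integral_deltaF_mul_abs_of_nonneg _ hη]
  simp only [abs_neg, deltaF_comp_neg]

end AbsKernel

noncomputable def reflectedMixture (a b c : ℝ) (ν η : Measure ℝ) : Measure ℝ :=
  ENNReal.ofReal a • ν + ENNReal.ofReal b • Measure.dirac 0
    + ENNReal.ofReal c • η.map fun x => -x

lemma reflectedMixture_eq_sum (a b c : ℝ) (ν η : Measure ℝ) :
    reflectedMixture a b c ν η = ∑ i : Fin 3, ENNReal.ofReal (![a, b, c] i)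
      • ![ν, Measure.dirac 0, η.map fun x => -x] i := by
  simp [reflectedMixture, Fin.sum_univ_three, add_assoc]

section ReflectedMixture

variable {a b c : ℝ} {ν η : Measure ℝ} {f : ℝ → ℝ}

lemma integral_reflectedMixture (ha : 0 ≤ a) (hb : 0 ≤ b) (hc : 0 ≤ c) {h : ℝ → ℝ}
    (hν : Integrable h ν) (hη : Integrable h (η.map fun x => -x)) :
    ∫ x, h x ∂reflectedMixture a b c ν η
      = a * ∫ x, h x ∂ν + b * h 0 + c * ∫ x, h x ∂(η.map fun x => -x) := by
  rw [reflectedMixture_eq_sum, integral_sum_smul_measure _ (by simp [Fin.forall_fin_succ, *])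
    (by simp [Fin.forall_fin_succ, *, integrable_dirac])]
  simp [Fin.sum_univ_three]

variable [IsProbabilityMeasure ν] [IsProbabilityMeasure η]

lemma integral_reflectedMixture_of_cbTwo (hf : CbTwo f) (ha : 0 ≤ a) (hb : 0 ≤ b) (hc : 0 ≤ c) :
    ∫ x, f x ∂reflectedMixture a b c ν η
      = a * ∫ x, f x ∂ν + b * f 0 + c * ∫ x, f (-x) ∂η := by
  have : IsProbabilityMeasure (η.map fun x => -x) :=
    Measure.isProbabilityMeasure_map measurable_neg.aemeasurable
  rw [integral_reflectedMixture ha hb hc (hf.integrable _) (hf.integrable _),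
    integral_map measurable_neg.aemeasurable hf.1.continuous.aestronglyMeasurable]

lemma integral_deriv_reflectedMixture (hf : CbTwo f) (ha : 0 ≤ a) (hb : 0 ≤ b) (hc : 0 ≤ c) :
    ∫ x, deriv f x ∂reflectedMixture a b c ν η
      = a * ∫ x, deriv f x ∂ν + b * deriv f 0 - c * ∫ x, deriv (fun z => f (-z)) x ∂η := by
  have : IsProbabilityMeasure (η.map fun x => -x) :=
    Measure.isProbabilityMeasure_map measurable_neg.aemeasurable
  rw [integral_reflectedMixture ha hb hc (hf.integrable_deriv _) (hf.integrable_deriv _),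
    integral_deriv_map_neg]
  ring

theorem integral_integral_deltaF_mul_abs_reflectedMixture (hf : CbTwo f)
    (ha : 0 ≤ a) (hb : 0 ≤ b) (hc : 0 ≤ c) (hν : ∀ᵐ x ∂ν, 0 ≤ x) (hη : ∀ᵐ x ∂η, 0 ≤ x)
    (hν₁ : Integrable (fun x => |x|) ν) (hη₁ : Integrable (fun x => |x|) η) :
    ∫ x, ∫ y, deltaF f x y * (|x| + |y|) ∂reflectedMixture a b c ν η ∂reflectedMixture a b c ν η
      = a ^ 2 * ∫ x, ∫ y, deltaF f x y * (x + y) ∂ν ∂ν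
        + c ^ 2 * ∫ x, ∫ y, deltaF (fun z => f (-z)) x y * (x + y) ∂η ∂η
        + 2 * a * (c + b) * ∫ x, deriv f x ∂ν
        + 2 * c * (a + b) * ∫ x, deriv (fun z => f (-z)) x ∂η
        + 2 * b * (c - a) * deriv f 0 := by
  set ν' := η.map fun x => -x
  have : IsProbabilityMeasure ν' := Measure.isProbabilityMeasure_map measurable_neg.aemeasurable
  have hν' : ∀ᵐ x ∂ν', x ≤ 0 := ae_map_neg_nonpos hη
  have hδ₀ : ∀ᵐ x ∂(Measure.dirac (0 : ℝ)), 0 ≤ x := (ae_dirac_iff measurableSet_Ici).2 le_rfl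
  have hδ₀' : ∀ᵐ x ∂(Measure.dirac (0 : ℝ)), x ≤ 0 := (ae_dirac_iff measurableSet_Iic).2 le_rfl
  have hf' : ∀ {m : Measure ℝ} [IsFiniteMeasure m], Integrable (deriv f) m :=
    hf.integrable_deriv _
  have hk : Measurable (uncurry fun x y => deltaF f x y * (|x| + |y|)) :=
    (measurable_deltaF f).mul (measurable_fst.abs.add measurable_snd.abs)
  obtain ⟨C, hkC⟩ := hf.exists_abs_deltaF_mul_le (K := fun x y => |x| + |y|) fun x y =>
    (abs_of_nonneg (add_nonneg (abs_nonneg x) (abs_nonneg y))).le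
  have : ∀ i, IsFiniteMeasure (![ν, Measure.dirac 0, ν'] i) := fun i => by
    fin_cases i <;> dsimp <;> infer_instance
  rw [reflectedMixture_eq_sum,
    integral_integral_sum_smul_measure _ (by simp [Fin.forall_fin_succ, *])
      (by simp [Fin.forall_fin_succ, *, integrable_dirac, integrable_abs_map_neg hη₁]) hk hkC]
  simp only [Fin.sum_univ_three, Matrix.cons_val_zero, Matrix.cons_val_one, Matrix.cons_val_two,
    Matrix.head_cons, Matrix.tail_cons]
  -- `δ₀` charges both half-lines, so all seven mixed terms come from the opposite-sign lemmas.
  rw [integral_integral_deltaF_mul_abs_of_nonneg f hν,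
    integral_integral_deltaF_mul_abs_map_neg f hη,
    integral_integral_deltaF_mul_abs_of_nonneg_of_nonpos f hν hδ₀' hf' hf',
    integral_integral_deltaF_mul_abs_of_nonneg_of_nonpos f hν hν' hf' hf',
    integral_integral_deltaF_mul_abs_of_nonpos_of_nonneg f hδ₀' hν hf' hf',
    integral_integral_deltaF_mul_abs_of_nonneg_of_nonpos f hδ₀ hδ₀' hf' hf',
    integral_integral_deltaF_mul_abs_of_nonneg_of_nonpos f hδ₀ hν' hf' hf',
    integral_integral_deltaF_mul_abs_of_nonpos_of_nonneg f hν' hν hf' hf',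
    integral_integral_deltaF_mul_abs_of_nonpos_of_nonneg f hν' hδ₀ hf' hf', integral_dirac,
    integral_deriv_map_neg]
  ring

end ReflectedMixture

def IsWeakSolution (a : ℝ) (K : ℝ → ℝ → ℝ) (ν : ℝ → Measure ℝ) : Prop :=
  ∀ f : ℝ → ℝ, CbTwo f → ∀ t : ℝ, 0 ≤ t →
    ∫ x, f x ∂(ν t) = f 0
      + a * (∫ s in (0:ℝ)..t, ∫ x, deriv f x ∂(ν s))
      + (1 / 2) * ∫ s in (0:ℝ)..t, ∫ x, ∫ y, deltaF f x y * K x y ∂(ν s) ∂(ν s)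

namespace IsWeakSolution

variable {a : ℝ} {K : ℝ → ℝ → ℝ} {ν : ℝ → Measure ℝ}

/-- The equation only constrains `ν t` for `t ≥ 0`, hence the clamping `u ↦ max u 0`. -/
lemma measurable_integral (hν : IsWeakSolution a K ν) {g : ℝ → ℝ} (hg : CbTwo g) :
    Measurable fun u => ∫ x, g x ∂ν (max u 0) := by
  have hmax : Measurable fun u : ℝ => max u 0 := measurable_id.max measurable_const
  simp_rw [hν g hg _ (le_max_right _ 0)]
  exact (measurable_const.add (((measurable_primitive _).comp hmax).const_mul a)).add
    (((measurable_primitive _).comp hmax).const_mul _)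

variable [∀ t, IsProbabilityMeasure (ν t)]

lemma measurable (hν : IsWeakSolution a K ν) :
    Measurable fun u => ν (max u 0) :=
  measurable_of_measurable_integral_cbTwo fun _ hg => hν.measurable_integral hg

variable {f : ℝ → ℝ} {T : ℝ}

lemma intervalIntegrable_integral_deriv (hν : IsWeakSolution a K ν) (hf : CbTwo f)
    (hT : 0 ≤ T) : IntervalIntegrable (fun s => ∫ x, deriv f x ∂ν s) volume 0 T :=
  let ⟨_, hC⟩ := hf.exists_abs_deriv_le
  intervalIntegrable_integral_of_measurable hν.measurable (measurable_deriv f) hC hT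

lemma intervalIntegrable_integral_integral_deltaF (hν : IsWeakSolution a K ν) (hf : CbTwo f)
    (hν₁ : ∀ t, 0 ≤ t → Integrable (fun x => |x|) (ν t))
    (hbd : ∀ T > (0:ℝ), ∃ M : ℝ, ∀ t ∈ Icc (0:ℝ) T, ∫ x, |x| ∂(ν t) ≤ M) (hT : 0 ≤ T) :
    IntervalIntegrable (fun s => ∫ x, ∫ y, deltaF f x y * (x + y) ∂ν s ∂ν s) volume 0 T :=
  let ⟨_, hC⟩ := hf.exists_abs_deltaF_mul_le fun x y => abs_add_le x y
  intervalIntegrable_integral_integral_of_measurable hν.measurable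
    (k := fun x y => deltaF f x y * (x + y))
    ((measurable_deltaF f).mul (measurable_fst.add measurable_snd)) hC hν₁ hbd hT

end IsWeakSolution

section MixtureInTime

variable {a b c t : ℝ} {νp η : ℝ → Measure ℝ} [∀ t, IsProbabilityMeasure (νp t)]
  [∀ t, IsProbabilityMeasure (η t)] {f : ℝ → ℝ}

lemma intervalIntegral_integral_deriv_reflectedMixture (hf : CbTwo f) (ha : 0 < a) (hb : 0 ≤ b)
    (hc : 0 < c) (hP : IntervalIntegrable (fun s => ∫ x, deriv f x ∂νp s) volume 0 (a * t))
    (hQ : IntervalIntegrable (fun s => ∫ x, deriv (fun z => f (-z)) x ∂η s) volume 0 (c * t)) :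
    ∫ s in (0:ℝ)..t, ∫ x, deriv f x ∂reflectedMixture a b c (νp (a * s)) (η (c * s))
      = (∫ s in (0:ℝ)..a * t, ∫ x, deriv f x ∂νp s) + b * deriv f 0 * t
        - ∫ s in (0:ℝ)..c * t, ∫ x, deriv (fun z => f (-z)) x ∂η s := by
  rw [intervalIntegral.integral_congr fun s _ => by
      rw [integral_deriv_reflectedMixture hf ha.le hb hc.le, sub_eq_add_neg, ← mul_neg],
    integral_comp_mul_left_add_const_add (G := fun u => -∫ x, deriv (fun z => f (-z)) x ∂η u)
      ha hc hP hQ.neg, intervalIntegral.integral_neg, sub_eq_add_neg]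

lemma intervalIntegral_integral_integral_deltaF_mul_abs_reflectedMixture (hf : CbTwo f) (ha : 0 < a)
    (hb : 0 ≤ b) (hc : 0 < c) (ht : 0 ≤ t)
    (hνp₀ : ∀ t, 0 < t → ∀ᵐ x ∂νp t, 0 ≤ x) (hη₀ : ∀ t, 0 < t → ∀ᵐ x ∂η t, 0 ≤ x)
    (hνp₁ : ∀ t, 0 ≤ t → Integrable (fun x => |x|) (νp t))
    (hη₁ : ∀ t, 0 ≤ t → Integrable (fun x => |x|) (η t))
    (hP : IntervalIntegrable (fun s => ∫ x, deriv f x ∂νp s) volume 0 (a * t))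
    (hQ : IntervalIntegrable (fun s => ∫ x, deriv (fun z => f (-z)) x ∂η s) volume 0 (c * t))
    (hA : IntervalIntegrable (fun s => ∫ x, ∫ y, deltaF f x y * (x + y) ∂νp s ∂νp s)
      volume 0 (a * t))
    (hB : IntervalIntegrable
      (fun s => ∫ x, ∫ y, deltaF (fun z => f (-z)) x y * (x + y) ∂η s ∂η s) volume 0 (c * t)) :
    ∫ s in (0:ℝ)..t, ∫ x, ∫ y, deltaF f x y * (|x| + |y|)
        ∂reflectedMixture a b c (νp (a * s)) (η (c * s))
        ∂reflectedMixture a b c (νp (a * s)) (η (c * s))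
      = a * (∫ s in (0:ℝ)..a * t, ∫ x, ∫ y, deltaF f x y * (x + y) ∂νp s ∂νp s)
        + c * (∫ s in (0:ℝ)..c * t, ∫ x, ∫ y, deltaF (fun z => f (-z)) x y * (x + y) ∂η s ∂η s)
        + 2 * (c + b) * (∫ s in (0:ℝ)..a * t, ∫ x, deriv f x ∂νp s)
        + 2 * (a + b) * (∫ s in (0:ℝ)..c * t, ∫ x, deriv (fun z => f (-z)) x ∂η s)
        + 2 * b * (c - a) * deriv f 0 * t := by
  have hpointwise : ∀ s ∈ Ι 0 t, ∫ x, ∫ y, deltaF f x y * (|x| + |y|)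
      ∂reflectedMixture a b c (νp (a * s)) (η (c * s))
      ∂reflectedMixture a b c (νp (a * s)) (η (c * s))
      = a * (a * (∫ x, ∫ y, deltaF f x y * (x + y) ∂νp (a * s) ∂νp (a * s))
          + 2 * (c + b) * ∫ x, deriv f x ∂νp (a * s)) + 2 * b * (c - a) * deriv f 0
        + c * (c * (∫ x, ∫ y, deltaF (fun z => f (-z)) x y * (x + y) ∂η (c * s) ∂η (c * s))
          + 2 * (a + b) * ∫ x, deriv (fun z => f (-z)) x ∂η (c * s)) := fun s hs => by
    have hs : 0 < s := (uIoc_of_le ht ▸ hs).1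
    rw [integral_integral_deltaF_mul_abs_reflectedMixture hf ha.le hb hc.le
      (hνp₀ _ (by positivity)) (hη₀ _ (by positivity)) (hνp₁ _ (by positivity))
      (hη₁ _ (by positivity))]
    ring
  rw [intervalIntegral.integral_congr_ae (ae_of_all _ hpointwise),
    integral_comp_mul_left_add_const_add ha hc ((hA.const_mul a).add (hP.const_mul _))
      ((hB.const_mul c).add (hQ.const_mul _)),
    intervalIntegral.integral_add (hA.const_mul a) (hP.const_mul _),
    intervalIntegral.integral_add (hB.const_mul c) (hQ.const_mul _)]
  simp only [intervalIntegral.integral_const_mul]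
  ring

end MixtureInTime

theorem IsWeakSolution.reflectedMixture {αp αm α a b c : ℝ} (ha : 0 < a) (hb : 0 ≤ b)
    (hc : 0 < c) (hsum : a + b + c = 1) (hdp : αp * a = α + c + b) (hdm : αm * c = a + b - α)
    (hα : α = a - c) {νp η : ℝ → Measure ℝ} [∀ t, IsProbabilityMeasure (νp t)]
    [∀ t, IsProbabilityMeasure (η t)] (hνp : IsWeakSolution αp (· + ·) νp)
    (hη : IsWeakSolution αm (· + ·) η)
    (hνp₀ : ∀ t, 0 < t → ∀ᵐ x ∂νp t, 0 ≤ x) (hη₀ : ∀ t, 0 < t → ∀ᵐ x ∂η t, 0 ≤ x)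
    (hνp₁ : ∀ t, 0 ≤ t → Integrable (fun x => |x|) (νp t))
    (hη₁ : ∀ t, 0 ≤ t → Integrable (fun x => |x|) (η t))
    (hνp_bd : ∀ T > (0:ℝ), ∃ M : ℝ, ∀ t ∈ Icc (0:ℝ) T, ∫ x, |x| ∂(νp t) ≤ M)
    (hη_bd : ∀ T > (0:ℝ), ∃ M : ℝ, ∀ t ∈ Icc (0:ℝ) T, ∫ x, |x| ∂(η t) ≤ M) :
    IsWeakSolution α (fun x y => |x| + |y|)
      fun t => reflectedMixture a b c (νp (a * t)) (η (c * t)) := by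
  intro f hf t ht
  have hg : CbTwo fun z => f (-z) := hf.comp_neg
  have hP := hνp.intervalIntegrable_integral_deriv hf (T := a * t) (by positivity)
  have hQ := hη.intervalIntegrable_integral_deriv hg (T := c * t) (by positivity)
  have hA := hνp.intervalIntegrable_integral_integral_deltaF hf hνp₁ hνp_bd (T := a * t)
    (by positivity)
  have hB := hη.intervalIntegrable_integral_integral_deltaF hg hη₁ hη_bd (T := c * t)
    (by positivity)
  beta_reduce
  rw [integral_reflectedMixture_of_cbTwo hf ha.le hb hc.le, hνp f hf _ (by positivity),
    hη _ hg _ (by positivity), intervalIntegral_integral_deriv_reflectedMixture hf ha hb hc hP hQ,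
    intervalIntegral_integral_integral_deltaF_mul_abs_reflectedMixture hf ha hb hc ht hνp₀ hη₀ hνp₁ hη₁
      hP hQ hA hB]
  beta_reduce
  rw [neg_zero]
  linear_combination (f 0) * hsum + (∫ s in (0:ℝ)..a * t, ∫ x, deriv f x ∂νp s) * hdp
    + (∫ s in (0:ℝ)..c * t, ∫ x, deriv (fun z => f (-z)) x ∂η s) * hdm - b * deriv f 0 * t * hα

theorem stmt7_general (αm αp : ℝ) (hαp : 1 < αp) (hord : αp ≤ αm)
    (lam lamStar γ α : ℝ)
    (hlam : lam = (αm - 1) / (αp * αm - 1))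
    (hlamStar : lamStar = (αp - 1) / (αp * αm - 1))
    (hγ : γ = (αp - 1) * (αm - 1) / (αp * αm - 1))
    (hα : α = (αm - αp) / (αp * αm - 1))
    (νp η : ℝ → Measure ℝ)
    (hprob : ∀ t, IsProbabilityMeasure (νp t) ∧ IsProbabilityMeasure (η t))
    (hνppos : ∀ t : ℝ, 0 < t → νp t (Ioi 0) = 1)
    (hηpos : ∀ t : ℝ, 0 < t → η t (Ioi 0) = 1)
    -- finite first moments, locally bounded in time
    (hint : ∀ t : ℝ, 0 ≤ t →
      Integrable (fun x => |x|) (νp t) ∧ Integrable (fun x => |x|) (η t))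
    (hbd : ∀ T > (0:ℝ), ∃ M : ℝ, ∀ t ∈ Icc (0:ℝ) T,
      ∫ x, |x| ∂(νp t) ≤ M ∧ ∫ x, |x| ∂(η t) ≤ M)
    -- `νp` solves the equation with drift `αp` and kernel x+y
    (heqp : ∀ f : ℝ → ℝ, CbTwo f → ∀ t : ℝ, 0 ≤ t →
      ∫ x, f x ∂(νp t) = f 0
        + αp * (∫ s in (0:ℝ)..t, ∫ x, deriv f x ∂(νp s))
        + (1 / 2) * ∫ s in (0:ℝ)..t, ∫ x, ∫ y, deltaF f x y * (x + y) ∂(νp s) ∂(νp s))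
    -- `η` solves the equation with drift `αm` and kernel x+y
    (heqm : ∀ f : ℝ → ℝ, CbTwo f → ∀ t : ℝ, 0 ≤ t →
      ∫ x, f x ∂(η t) = f 0
        + αm * (∫ s in (0:ℝ)..t, ∫ x, deriv f x ∂(η s))
        + (1 / 2) * ∫ s in (0:ℝ)..t, ∫ x, ∫ y, deltaF f x y * (x + y) ∂(η s) ∂(η s))
    -- the reflected family and the three-component mixture
    (νm : ℝ → Measure ℝ) (hνm : ∀ t, νm t = Measure.map (fun x : ℝ => -x) (η t))
    (μ : ℝ → Measure ℝ)
    (hμ : ∀ t : ℝ, μ t = ENNReal.ofReal lam • νp (lam * t)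
      + ENNReal.ofReal γ • Measure.dirac (0:ℝ)
      + ENNReal.ofReal lamStar • νm (lamStar * t)) :
    (0 < lam ∧ 0 < lamStar ∧ 0 < γ ∧ lam + lamStar + γ = 1) ∧
    (0 ≤ α ∧ α < 1) ∧
    -- `μ` solves the equation with drift α and kernel |x|+|y|
    (∀ f : ℝ → ℝ, CbTwo f → ∀ t : ℝ, 0 ≤ t →
      ∫ x, f x ∂(μ t) = f 0
        + α * (∫ s in (0:ℝ)..t, ∫ x, deriv f x ∂(μ s))
        + (1 / 2) * ∫ s in (0:ℝ)..t, ∫ x, ∫ y,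
            deltaF f x y * (|x| + |y|) ∂(μ s) ∂(μ s)) := by
  have hD : 0 < αp * αm - 1 := by nlinarith
  have hlam0 : 0 < lam := hlam ▸ div_pos (by linarith) hD
  have hlamStar0 : 0 < lamStar := hlamStar ▸ div_pos (by linarith) hD
  have hγ0 : 0 < γ := hγ ▸ div_pos (by nlinarith) hD
  have hsum : lam + lamStar + γ = 1 := by
    rw [hlam, hlamStar, hγ, ← add_div, ← add_div, div_eq_one_iff_eq hD.ne']; ring
  refine ⟨⟨hlam0, hlamStar0, hγ0, hsum⟩,
    ⟨hα ▸ div_nonneg (by linarith) hD.le, by rw [hα, div_lt_one hD]; nlinarith⟩, ?_⟩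
  have : ∀ t, IsProbabilityMeasure (νp t) := fun t => (hprob t).1
  have : ∀ t, IsProbabilityMeasure (η t) := fun t => (hprob t).2
  obtain rfl : μ = fun t => reflectedMixture lam γ lamStar (νp (lam * t)) (η (lamStar * t)) :=
    funext fun t => by rw [hμ, hνm, reflectedMixture]
  exact IsWeakSolution.reflectedMixture hlam0 hγ0.le hlamStar0 (by linarith)
    (by rw [hlam, hlamStar, hγ, hα]; field_simp; ring)
    (by rw [hlam, hlamStar, hγ, hα]; field_simp; ring)
    (by rw [hlam, hlamStar, hα]; field_simp; ring) heqp heqm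
    (fun t ht => ae_nonneg_of_measure_Ioi_eq_one (hνppos t ht))
    (fun t ht => ae_nonneg_of_measure_Ioi_eq_one (hηpos t ht))
    (fun t ht => (hint t ht).1) (fun t ht => (hint t ht).2)
    (fun T hT => (hbd T hT).imp fun _ hM t ht => (hM t ht).1)
    (fun T hT => (hbd T hT).imp fun _ hM t ht => (hM t ht).2)

theorem stmt7 (αm αp : ℝ) (hαp : 1 < αp) (hord : αp ≤ αm)
    (lam lamStar γ α : ℝ)
    (hlam : lam = (αm - 1) / (αp * αm - 1))
    (hlamStar : lamStar = (αp - 1) / (αp * αm - 1))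
    (hγ : γ = (αp - 1) * (αm - 1) / (αp * αm - 1))
    (hα : α = (αm - αp) / (αp * αm - 1))
    (νp η : ℝ → Measure ℝ)
    (hprob : ∀ t, IsProbabilityMeasure (νp t) ∧ IsProbabilityMeasure (η t))
    (hνp0 : νp 0 = Measure.dirac 0) (hη0 : η 0 = Measure.dirac 0)
    (hνppos : ∀ t : ℝ, 0 < t → νp t (Ioi 0) = 1)
    (hηpos : ∀ t : ℝ, 0 < t → η t (Ioi 0) = 1)
    -- finite first moments, locally bounded in time
    (hint : ∀ t : ℝ, 0 ≤ t →
      Integrable (fun x => |x|) (νp t) ∧ Integrable (fun x => |x|) (η t))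
    (hbd : ∀ T > (0:ℝ), ∃ M : ℝ, ∀ t ∈ Icc (0:ℝ) T,
      ∫ x, |x| ∂(νp t) ≤ M ∧ ∫ x, |x| ∂(η t) ≤ M)
    -- `νp` solves the equation with drift `αp` and kernel x+y
    (heqp : ∀ f : ℝ → ℝ, CbTwo f → ∀ t : ℝ, 0 ≤ t →
      ∫ x, f x ∂(νp t) = f 0
        + αp * (∫ s in (0:ℝ)..t, ∫ x, deriv f x ∂(νp s))
        + (1 / 2) * ∫ s in (0:ℝ)..t, ∫ x, ∫ y, deltaF f x y * (x + y) ∂(νp s) ∂(νp s))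
    -- `η` solves the equation with drift `αm` and kernel x+y
    (heqm : ∀ f : ℝ → ℝ, CbTwo f → ∀ t : ℝ, 0 ≤ t →
      ∫ x, f x ∂(η t) = f 0
        + αm * (∫ s in (0:ℝ)..t, ∫ x, deriv f x ∂(η s))
        + (1 / 2) * ∫ s in (0:ℝ)..t, ∫ x, ∫ y, deltaF f x y * (x + y) ∂(η s) ∂(η s))
    -- the reflected family and the three-component mixture
    (νm : ℝ → Measure ℝ) (hνm : ∀ t, νm t = Measure.map (fun x : ℝ => -x) (η t))
    (μ : ℝ → Measure ℝ)
    (hμ : ∀ t : ℝ, μ t = ENNReal.ofReal lam • νp (lam * t)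
      + ENNReal.ofReal γ • Measure.dirac (0:ℝ)
      + ENNReal.ofReal lamStar • νm (lamStar * t)) :
    (0 < lam ∧ 0 < lamStar ∧ 0 < γ ∧ lam + lamStar + γ = 1) ∧
    (0 ≤ α ∧ α < 1) ∧
    -- `μ` solves the equation with drift α and kernel |x|+|y|
    (∀ f : ℝ → ℝ, CbTwo f → ∀ t : ℝ, 0 ≤ t →
      ∫ x, f x ∂(μ t) = f 0
        + α * (∫ s in (0:ℝ)..t, ∫ x, deriv f x ∂(μ s))
        + (1 / 2) * ∫ s in (0:ℝ)..t, ∫ x, ∫ y,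
            deltaF f x y * (|x| + |y|) ∂(μ s) ∂(μ s)) :=
  stmt7_general αm αp hαp hord lam lamStar γ α hlam hlamStar hγ hα νp η hprob hνppos hηpos hint hbd
    heqp heqm νm hνm μ hμ
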